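/- arXiv:2404.12485 — 10 statements merged into one kernel-verified Lean document; each statement's English description precedes it below -/
import Mathlib

section
/- The function n ↦ 4n(2^{1/n} - 1) is strictly decreasing on the positive integers. -/
/-!
With `t = 1 / x`, the quantity `x * (b ^ (1 / x) - 1)` is the slope `(b ^ t - b ^ 0) / (t - 0)` of
a secant of the strictly convex function `t ↦ b ^ t` through `0`. Such slopes increase strictly
with `t`, hence decrease strictly with `x`.
-/

open Set

namespace Real

theorem strictConvexOn_rpow_left {b : ℝ} (hb₀ : 0 < b) (hb₁ : b ≠ 1) :
    StrictConvexOn ℝ univ fun t : ℝ ↦ b ^ t := by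
  refine ⟨convex_univ, fun x _ y _ hxy a c ha hc hac ↦ ?_⟩
  have hlog : log b ≠ 0 := log_ne_zero_of_pos_of_ne_one hb₀ hb₁
  have key := strictConvexOn_exp.2 (mem_univ (log b * x)) (mem_univ (log b * y))
    (by simpa [hlog] using hxy) ha hc hac
  simp only [rpow_def_of_pos hb₀, smul_eq_mul] at key ⊢
  convert key using 2
  ring

theorem strictMonoOn_rpow_sub_one_div {b : ℝ} (hb₀ : 0 < b) (hb₁ : b ≠ 1) :
    StrictMonoOn (fun t : ℝ ↦ (b ^ t - 1) / t) (Ioi 0) := by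
  intro s (hs : 0 < s) t (ht : 0 < t) hst
  simpa using (strictConvexOn_rpow_left hb₀ hb₁).secant_strict_mono (mem_univ 0) (mem_univ s)
    (mem_univ t) hs.ne' ht.ne' hst

theorem strictAntiOn_mul_rpow_inv_sub_one {b : ℝ} (hb₀ : 0 < b) (hb₁ : b ≠ 1) :
    StrictAntiOn (fun x : ℝ ↦ x * (b ^ x⁻¹ - 1)) (Ioi 0) := by
  intro x (hx : 0 < x) y (hy : 0 < y) hxy
  have h := strictMonoOn_rpow_sub_one_div hb₀ hb₁ (inv_pos.2 hy) (inv_pos.2 hx)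
    (inv_strictAntiOn hx hy hxy)
  simpa only [div_inv_eq_mul, mul_comm] using h

end Real

/-- The function `n ↦ 4n(2^{1/n} - 1)` is strictly decreasing on the positive integers. -/
theorem stmt_0 :
    ∀ m n : ℕ, 0 < m → m < n →
      4 * (n : ℝ) * ((2 : ℝ) ^ (1 / (n : ℝ)) - 1)
        < 4 * (m : ℝ) * ((2 : ℝ) ^ (1 / (m : ℝ)) - 1) := by
  intro m n hm hmn
  have hm₀ : (0 : ℝ) < m := Nat.cast_pos.2 hm
  have h := Real.strictAntiOn_mul_rpow_inv_sub_one two_pos (by norm_num : (2 : ℝ) ≠ 1) hm₀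
    (hm₀.trans (Nat.cast_lt.2 hmn)) (Nat.cast_lt.2 hmn)
  simp only [one_div, mul_assoc]
  linarith
end

section
/- For every D > 0 and every λ ∈ [0,1), the consistency of the schedule X(λ) against the distribution μ_D with density 2D/x² on [D, 2D] equals exactly 4 ln 2, i.e., E_{z∼μ_D}[z] / E_{z∼μ_D}[ℓ(X(λ),z)] = 4 ln 2. -/
/-- `ell lam T` is the length of the largest contract of the schedule
`X(λ) = (2^{i-λ})_{i∈ℤ}` completed by time `T`; contract `i` completes at time
`2^{i+1-λ}`. -/
noncomputable def ell (lam T : ℝ) : ℝ :=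
  (2 : ℝ) ^ (((⌊Real.logb 2 T - 1 + lam⌋ : ℤ) : ℝ) - lam)

/-!
On `(0, ∞)`, `ell` is a step function: `ell x = 2^(n-λ)` exactly when
`2 · 2^(n-λ) ≤ x < 4 · 2^(n-λ)`, and `ell (2x) = 2 ell x`. With `K = ell D`, the point `4K`
lies in `(D, 2D]`, and `ell = K` on `[D, 4K)`, `ell = 2K` on `[4K, 2D]`. Hence
`∫_D^{2D} ell · C/x² = KC (1/D - 1/(4K)) + 2KC (1/(4K) - 1/(2D)) = C/4`,
independently of `D` and `λ`, while `∫_D^{2D} x · C/x² = C log 2`.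
-/

open Real Set intervalIntegral
open scoped Interval

section Integrals

variable {a b : ℝ}

lemma integral_mul_div_sq (C : ℝ) (ha : 0 < a) (hb : 0 < b) :
    ∫ x in a..b, x * (C / x ^ 2) = C * log (b / a) := by
  have hx : EqOn (fun x => x * (C / x ^ 2)) (fun x => C * x⁻¹) [[a, b]] := by
    intro x hx
    have : x ≠ 0 := fun h => notMem_uIcc_of_lt ha hb (h ▸ hx)
    field_simp
  rw [integral_congr hx, integral_const_mul, integral_inv_of_pos ha hb]

lemma intervalIntegrable_div_sq (C : ℝ) (ha : 0 < a) (hb : 0 < b) :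
    IntervalIntegrable (fun x => C / x ^ 2) MeasureTheory.volume a b :=
  ContinuousOn.intervalIntegrable <| continuousOn_const.div (continuousOn_pow 2) fun _ hx =>
    pow_ne_zero 2 fun h => notMem_uIcc_of_lt ha hb (h ▸ hx)

lemma integral_div_sq (C : ℝ) (ha : 0 < a) (hb : 0 < b) :
    ∫ x in a..b, C / x ^ 2 = C * (a⁻¹ - b⁻¹) := by
  have hderiv : ∀ x ∈ [[a, b]], HasDerivAt (fun x => -C * x⁻¹) (C / x ^ 2) x := fun x hx =>
    ((hasDerivAt_inv fun h => notMem_uIcc_of_lt ha hb (h ▸ hx)).const_mul (-C)).congr_deriv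
      (by ring)
  rw [integral_eq_sub_of_hasDerivAt hderiv (intervalIntegrable_div_sq C ha hb)]
  ring

end Integrals

section Schedule

variable {lam x y : ℝ}

lemma floor_logb_eq_iff (hx : 0 < x) (n : ℤ) :
    ⌊logb 2 x - 1 + lam⌋ = n ↔
      x ∈ Ico (2 * (2 : ℝ) ^ ((n : ℝ) - lam)) (4 * (2 : ℝ) ^ ((n : ℝ) - lam)) := by
  have h2 : (2 : ℝ) * 2 ^ ((n : ℝ) - lam) = 2 ^ ((n : ℝ) - lam + 1) := by
    rw [rpow_add_one two_ne_zero, mul_comm]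
  have h4 : (4 : ℝ) * 2 ^ ((n : ℝ) - lam) = 2 ^ ((n : ℝ) - lam + 2) := by
    rw [rpow_add two_pos, mul_comm]; norm_num
  rw [Int.floor_eq_iff, mem_Ico, h2, h4, ← le_logb_iff_rpow_le one_lt_two hx,
    ← logb_lt_iff_lt_rpow one_lt_two hx]
  constructor <;> rintro ⟨h, h'⟩ <;> constructor <;> linarith

lemma mem_Ico_ell (hx : 0 < x) : x ∈ Ico (2 * ell lam x) (4 * ell lam x) :=
  (floor_logb_eq_iff hx _).mp rfl

lemma ell_eq_of_mem_Ico (hx : x ∈ Ico (2 * ell lam y) (4 * ell lam y)) :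
    ell lam x = ell lam y := by
  have hx0 : 0 < x := lt_of_lt_of_le (by unfold ell; positivity) hx.1
  rw [ell, (floor_logb_eq_iff hx0 _).mpr hx, ell]

lemma ell_two_mul (hx : 0 < x) : ell lam (2 * x) = 2 * ell lam x := by
  have hlog : logb 2 (2 * x) - 1 + lam = (logb 2 x - 1 + lam) + 1 := by
    rw [logb_mul two_ne_zero hx.ne', logb_self_eq_one one_lt_two]; ring
  rw [ell, ell, hlog, Int.floor_add_one, Int.cast_add, Int.cast_one, add_sub_right_comm,
    rpow_add_one two_ne_zero, mul_comm]

end Schedule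

theorem integral_ell_mul_div_sq (lam C : ℝ) {D : ℝ} (hD : 0 < D) :
    ∫ x in D..(2 * D), ell lam x * (C / x ^ 2) = C / 4 := by
  set K := ell lam D
  obtain ⟨hKD, hDK⟩ : D ∈ Ico (2 * K) (4 * K) := mem_Ico_ell hD
  have hK : 0 < K := by unfold K ell; positivity
  have h4K : 4 * K ≤ 2 * D := by linarith
  have lower : EqOn (fun x => ell lam x * (C / x ^ 2)) (fun x => K * C / x ^ 2) (Ioo D (4 * K)) :=
    fun x hx => by
      dsimp only
      rw [ell_eq_of_mem_Ico ⟨by linarith [hx.1], hx.2⟩, mul_div_assoc]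
  have upper : EqOn (fun x => ell lam x * (C / x ^ 2)) (fun x => 2 * K * C / x ^ 2)
      (Ioo (4 * K) (2 * D)) := fun x hx => by
    have hhalf : ell lam (x / 2) = K :=
      ell_eq_of_mem_Ico ⟨by linarith [hx.1], by linarith [hx.2]⟩
    dsimp only
    rw [← mul_div_cancel₀ x two_ne_zero, ell_two_mul (by linarith [hx.1]), hhalf,
      mul_div_cancel₀ x two_ne_zero, mul_div_assoc]
  have hI₁ : IntervalIntegrable (fun x => ell lam x * (C / x ^ 2)) MeasureTheory.volume
      D (4 * K) :=
    (intervalIntegrable_div_sq _ hD (by positivity)).congr_uIoo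
      (uIoo_of_le hDK.le ▸ lower.symm)
  have hI₂ : IntervalIntegrable (fun x => ell lam x * (C / x ^ 2)) MeasureTheory.volume
      (4 * K) (2 * D) :=
    (intervalIntegrable_div_sq _ (by positivity) (by positivity)).congr_uIoo
      (uIoo_of_le h4K ▸ upper.symm)
  rw [← integral_add_adjacent_intervals hI₁ hI₂, integral_congr_Ioo_of_le hDK.le lower,
    integral_congr_Ioo_of_le h4K upper, integral_div_sq _ hD (by positivity),
    integral_div_sq _ (by positivity) (by positivity)]
  field_simp
  ring

theorem stmt_10_general (D : ℝ) (hD : 0 < D) (lam : ℝ) :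
    (∫ x in D..(2 * D), x * (2 * D / x ^ 2))
        / (∫ x in D..(2 * D), ell lam x * (2 * D / x ^ 2))
      = 4 * Real.log 2 := by
  rw [integral_mul_div_sq _ hD (by positivity), integral_ell_mul_div_sq _ _ hD,
    mul_div_cancel_right₀ _ hD.ne']
  field_simp

/-- For every `D > 0` and every `λ ∈ [0,1)`, the consistency of `X(λ)` against
the distribution with density `2D/x²` on `[D,2D]` equals exactly `4 ln 2`:
`E[z] / E[ℓ(X(λ),z)] = 4 ln 2`. -/
theorem stmt_10 (D : ℝ) (hD : 0 < D) (lam : ℝ) (hlam : lam ∈ Set.Ico (0 : ℝ) 1) :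
    (∫ x in D..(2 * D), x * (2 * D / x ^ 2))
        / (∫ x in D..(2 * D), ell lam x * (2 * D / x ^ 2))
      = 4 * Real.log 2 :=
  stmt_10_general D hD lam
end

section
/- Given k predicted times τ_j = 2^{i_j + δ_j} with i_j ∈ ℤ, δ_j ∈ [0,1), and 0 ≤ δ_0 ≤ δ_1 ≤ ... ≤ δ_{k-1} < 1, let D_j denote the clockwise circular gap: D_j = δ_j - δ_{j-1} for j ≥ 1 and D_0 = 1 - (δ_{k-1} - δ_0). Then the schedule X_j = (2^{i + δ_j})_{i∈ℤ} has consistency at most 2^{2 - D_j}, i.e., for every prediction τ_m in the set, τ_m / ℓ(X_j, τ_m) ≤ 2^{2 - D_j}. -/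
/-- Given `k` predicted times `τ_m = 2^{i_m + δ_m}` with `0 ≤ δ_0 ≤ ... ≤ δ_{k-1} < 1`,
and circular gaps `D_j = δ_j - δ_{j-1}` (for `j ≥ 1`), `D_0 = 1 - (δ_{k-1} - δ_0)`,
the schedule `X_j = (2^{i+δ_j})_{i∈ℤ}` has consistency at most `2^{2 - D_j}`:
for every prediction `τ_m`, `τ_m / ℓ(X_j, τ_m) ≤ 2^{2 - D_j}`. -/
theorem stmt_11 (k : ℕ) (hk : 0 < k) (idx : ℕ → ℤ) (δ : ℕ → ℝ)
    (hδ : ∀ j < k, δ j ∈ Set.Ico (0 : ℝ) 1)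
    (hmono : ∀ a b, a ≤ b → b < k → δ a ≤ δ b)
    (Dgap : ℕ → ℝ)
    (hD0 : Dgap 0 = 1 - (δ (k - 1) - δ 0))
    (hDj : ∀ j, 1 ≤ j → j < k → Dgap j = δ j - δ (j - 1)) :
    ∀ j < k, ∀ m < k,
      (2 : ℝ) ^ ((idx m : ℝ) + δ m)
          / ell (-(δ j)) ((2 : ℝ) ^ ((idx m : ℝ) + δ m))
        ≤ (2 : ℝ) ^ ((2 : ℝ) - Dgap j) := by
  intro j hj m hm
  obtain ⟨hm0, hm1⟩ := hδ m hm
  obtain ⟨hj0, hj1⟩ := hδ j hj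
  have h2 : (1:ℝ) < 2 := one_lt_two
  have hlog : Real.logb 2 ((2:ℝ) ^ ((idx m : ℝ) + δ m)) = (idx m : ℝ) + δ m :=
    Real.logb_rpow (by norm_num) (by norm_num)
  have hfloor : ⌊Real.logb 2 ((2:ℝ) ^ ((idx m : ℝ) + δ m)) - 1 + (-(δ j))⌋
      = idx m + ⌊δ m - 1 - δ j⌋ := by
    rw [hlog, show (idx m : ℝ) + δ m - 1 + (-(δ j)) = (idx m : ℝ) + (δ m - 1 - δ j) by ring,
      Int.floor_intCast_add]
  have hratio : (2 : ℝ) ^ ((idx m : ℝ) + δ m)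
      / ell (-(δ j)) ((2 : ℝ) ^ ((idx m : ℝ) + δ m))
      = (2:ℝ) ^ (δ m - (⌊δ m - 1 - δ j⌋ : ℝ) - δ j) := by
    rw [ell, hfloor, ← Real.rpow_sub (by norm_num)]
    congr 1
    push_cast
    ring
  rw [hratio, Real.rpow_le_rpow_left_iff h2]
  by_cases hle : δ j ≤ δ m
  · have hf : ⌊δ m - 1 - δ j⌋ = -1 := by
      rw [Int.floor_eq_iff]
      constructor <;> push_cast <;> linarith
    rw [hf]
    push_cast
    rcases Nat.eq_zero_or_pos j with h0 | h1
    · subst h0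
      rw [hD0]
      have : δ m ≤ δ (k - 1) := hmono m (k - 1) (by omega) (by omega)
      linarith
    · rw [hDj j h1 hj]
      have := (hδ (j - 1) (by omega)).1
      linarith
  · push_neg at hle
    have hf : ⌊δ m - 1 - δ j⌋ = -2 := by
      rw [Int.floor_eq_iff]
      constructor <;> push_cast <;> linarith
    rw [hf]
    push_cast
    rcases Nat.eq_zero_or_pos j with h0 | h1
    · exact absurd (hmono 0 m (Nat.zero_le _) hm) (by subst h0; linarith)
    · rw [hDj j h1 hj]
      have hmj : m < j := by
        by_contra h
        push_neg at h
        exact absurd (hmono j m h hm) (by linarith)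
      have : δ m ≤ δ (j - 1) := hmono m (j - 1) (by omega) (by omega)
      linarith
end

section
/- For any prediction set P of k times, there exists a 4-robust schedule X (of the form X(λ) = (2^{i-λ})_{i∈ℤ}) with consistency at most 2^{2 - 1/k}: for every τ ∈ P, τ/ℓ(X,τ) ≤ 2^{2-1/k}. -/
/-- Combinatorial pigeonhole: among at most `k` points in `[0,1)` there is a point `a`
whose cyclic successor gap is at least `1/k`. -/
lemma key_gap (k : ℕ) (hk : 0 < k) (T : Finset ℝ) (hT : T.Nonempty)
    (hcard : T.card ≤ k) (hmem : ∀ b ∈ T, 0 ≤ b ∧ b < 1) :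
    ∃ a ∈ T, ∀ b ∈ T, (a < b → a + 1/k ≤ b) ∧ (b < a → a - 1 + 1/k ≤ b) := by
  have hk' : (0:ℝ) < k := by exact_mod_cast hk
  set g : ℝ := 1/k with hgdef
  have hg : 0 < g := by positivity
  have hkg : (k:ℝ) * g = 1 := by rw [hgdef]; field_simp
  set a0 := T.min' hT with ha0
  by_cases hB : ∀ b ∈ T, b ≠ a0 → a0 + g ≤ b
  · refine ⟨a0, T.min'_mem hT, fun b hb => ⟨fun hab => hB b hb (ne_of_gt hab),
      fun hba => (not_le.mpr hba (T.min'_le b hb)).elim⟩⟩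
  · push_neg at hB
    obtain ⟨c, hcT, hc_ne, hc_lt⟩ := hB
    set φ : ℝ → ℤ := fun b => ⌊(b - a0)/g⌋ with hφ
    have hφ_mem : ∀ b ∈ T, φ b ∈ Finset.Icc (0:ℤ) ((k:ℤ)-1) := by
      intro b hb
      have h1 : a0 ≤ b := T.min'_le b hb
      have h2 : b - a0 < 1 := by
        have hb1 := (hmem b hb).2
        have ha00 := (hmem a0 (T.min'_mem hT)).1
        linarith
      simp only [Finset.mem_Icc]
      constructor
      · exact Int.floor_nonneg.mpr (div_nonneg (sub_nonneg.mpr h1) hg.le)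
      · have hlt : (b - a0)/g < (k:ℝ) := by
          rw [div_lt_iff₀ hg]
          nlinarith
        have : φ b < (k:ℤ) := Int.floor_lt.mpr (by push_cast; exact hlt)
        omega
    have hφa0 : φ a0 = 0 := by simp [hφ]
    have hφc : φ c = 0 := by
      rw [hφ]
      apply Int.floor_eq_zero_iff.mpr
      constructor
      · exact div_nonneg (sub_nonneg.mpr (T.min'_le c hcT)) hg.le
      · show (c - a0)/g < 1
        rw [div_lt_one hg]; linarith
    have h0img : (0:ℤ) ∈ T.image φ := Finset.mem_image.mpr ⟨a0, T.min'_mem hT, hφa0⟩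
    have himg : (T.image φ).card < (Finset.Icc (0:ℤ) ((k:ℤ)-1)).card := by
      have hsub : T.image φ ⊆ (T.erase c).image φ := by
        intro i hi
        obtain ⟨b, hb, rfl⟩ := Finset.mem_image.mp hi
        by_cases hbc : b = c
        · subst hbc
          exact Finset.mem_image.mpr ⟨a0, Finset.mem_erase.mpr ⟨Ne.symm hc_ne, T.min'_mem hT⟩,
            by rw [hφa0, hφc]⟩
        · exact Finset.mem_image.mpr ⟨b, Finset.mem_erase.mpr ⟨hbc, hb⟩, rfl⟩
      have h1 : (T.image φ).card ≤ T.card - 1 := by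
        calc (T.image φ).card ≤ ((T.erase c).image φ).card := Finset.card_le_card hsub
          _ ≤ (T.erase c).card := Finset.card_image_le
          _ = T.card - 1 := Finset.card_erase_of_mem hcT
      have h2 : (Finset.Icc (0:ℤ) ((k:ℤ)-1)).card = k := by
        rw [Int.card_Icc]; omega
      have h3 : 1 ≤ T.card := Finset.card_pos.mpr hT
      omega
    obtain ⟨i, hi_mem, hi_not⟩ : ∃ i ∈ Finset.Icc (0:ℤ) ((k:ℤ)-1), i ∉ T.image φ := by
      by_contra hcon
      push_neg at hcon
      exact absurd (Finset.card_le_card fun x hx => hcon x hx) (not_le.mpr himg)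
    have hi0 : 0 < i := by
      have hne : i ≠ 0 := fun h => hi_not (h ▸ h0img)
      have := (Finset.mem_Icc.mp hi_mem).1
      omega
    have hi1 : (1:ℝ) ≤ (i:ℝ) := by exact_mod_cast hi0
    set T' := T.filter (fun b => b < a0 + i * g) with hT'
    have ha0T' : a0 ∈ T' := Finset.mem_filter.mpr ⟨T.min'_mem hT, by nlinarith⟩
    have hT'ne : T'.Nonempty := ⟨a0, ha0T'⟩
    set a := T'.max' hT'ne with ha
    have haT' : a ∈ T' := T'.max'_mem hT'ne
    have haT : a ∈ T := (Finset.mem_filter.mp haT').1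
    have ha_lt : a < a0 + i * g := (Finset.mem_filter.mp haT').2
    refine ⟨a, haT, fun b hb => ⟨?_, ?_⟩⟩
    · intro hab
      have hbnot : a0 + (i:ℝ)*g ≤ b := by
        by_contra h
        push_neg at h
        exact absurd (T'.le_max' b (Finset.mem_filter.mpr ⟨hb, h⟩)) (not_le.mpr hab)
      have hφb_ne : φ b ≠ i := fun h => hi_not (Finset.mem_image.mpr ⟨b, hb, h⟩)
      have hφb_ge : i ≤ φ b := by
        rw [hφ]
        apply Int.le_floor.mpr
        rw [le_div_iff₀ hg]
        push_cast
        linarith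
      have hge1 : i + 1 ≤ φ b := by omega
      have hge2 : ((i:ℝ) + 1) ≤ (b - a0)/g := by
        have := Int.le_floor.mp hge1
        push_cast at this
        exact this
      rw [le_div_iff₀ hg] at hge2
      nlinarith
    · intro hba
      have h1 : a0 ≤ b := T.min'_le b hb
      have h2 : (i:ℝ) ≤ (k:ℝ) - 1 := by
        have := (Finset.mem_Icc.mp hi_mem).2
        push_cast at *
        exact_mod_cast (by exact_mod_cast this : (i:ℝ) ≤ ((k:ℤ):ℝ) - 1)
      have h3 : (i:ℝ) * g ≤ 1 - g := by nlinarith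
      linarith

/-- For any prediction set `P = {τ_0,…,τ_{k-1}}` of `k` positive times, there exists a
4-robust schedule `X(λ)`, `λ ∈ [0,1)`, whose consistency is at most `2^{2-1/k}`:
for every `τ ∈ P`, `τ/ℓ(X(λ),τ) ≤ 2^{2-1/k}`. -/
theorem stmt_13 (k : ℕ) (hk : 0 < k) (τ : ℕ → ℝ) (hτ : ∀ j < k, 0 < τ j) :
    ∃ lam ∈ Set.Ico (0 : ℝ) 1,
      ∀ j < k, τ j / ell lam (τ j) ≤ (2 : ℝ) ^ ((2 : ℝ) - 1 / (k : ℝ)) := by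
  have hk' : (0:ℝ) < k := by exact_mod_cast hk
  set g : ℝ := 1/k with hgdef
  have hg : 0 < g := by positivity
  have hg1 : g ≤ 1 := by
    rw [hgdef, div_le_one hk']
    exact_mod_cast hk
  set T := (Finset.range k).image (fun j => Int.fract (Real.logb 2 (τ j))) with hTdef
  have hTne : T.Nonempty := Finset.Nonempty.image ⟨0, Finset.mem_range.mpr hk⟩ _
  have hTcard : T.card ≤ k := le_trans Finset.card_image_le (by simp)
  have hTmem : ∀ b ∈ T, 0 ≤ b ∧ b < 1 := by
    intro b hb
    obtain ⟨j, _, rfl⟩ := Finset.mem_image.mp hb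
    exact ⟨Int.fract_nonneg _, Int.fract_lt_one _⟩
  obtain ⟨a, haT, hprop⟩ := key_gap k hk T hTne hTcard hTmem
  obtain ⟨ha0, ha1⟩ := hTmem a haT
  refine ⟨Int.fract (-(a + g)), Set.mem_Ico.mpr ⟨Int.fract_nonneg _, Int.fract_lt_one _⟩, ?_⟩
  intro j hj
  set lam := Int.fract (-(a + g)) with hlam
  set L := Real.logb 2 (τ j) with hL
  have hbT : Int.fract L ∈ T := Finset.mem_image.mpr ⟨j, Finset.mem_range.mpr hj, rfl⟩
  set b := Int.fract L with hb
  obtain ⟨hb0, hb1⟩ := hTmem b hbT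
  obtain ⟨hgt, hlt⟩ := hprop b hbT
  have key1 : Int.fract (L + lam) = Int.fract (b - a - g) := by
    have e1 : L + lam = (b - a - g) + ((⌊L⌋ - ⌊-(a+g)⌋ : ℤ) : ℝ) := by
      rw [hb, hlam]
      simp only [Int.fract]
      push_cast
      ring
    rw [e1, Int.fract_add_intCast]
  have key2 : Int.fract (b - a - g) ≤ 1 - g := by
    rcases lt_trichotomy b a with h | h | h
    · have h1 : a - 1 + g ≤ b := hlt h
      rw [← Int.fract_add_one (b - a - g)]
      rcases eq_or_lt_of_le h1 with he | hlt'
      · rw [show b - a - g + 1 = 0 by linarith, Int.fract_zero]; linarith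
      · rw [Int.fract_eq_self.mpr ⟨by linarith, by linarith⟩]; linarith
    · rw [h, show a - a - g = -g by ring, ← Int.fract_add_one (-g), show -g + 1 = 1 - g by ring]
      rcases eq_or_lt_of_le hg1 with he | h2
      · rw [show (1:ℝ) - g = 0 by linarith, Int.fract_zero]
      · rw [Int.fract_eq_self.mpr ⟨by linarith, by linarith⟩]
    · have h1 : a + g ≤ b := hgt h
      rw [Int.fract_eq_self.mpr ⟨by linarith, by linarith⟩]; linarith
  have hτj : 0 < τ j := hτ j hj
  have h2L : (2:ℝ) ^ L = τ j := Real.rpow_logb two_pos (by norm_num) hτj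
  have hfloor : ⌊L - 1 + lam⌋ = ⌊L + lam⌋ - 1 := by
    rw [show L - 1 + lam = (L + lam) + ((-1:ℤ):ℝ) by push_cast; ring, Int.floor_add_intCast]
    omega
  have hell : ell lam (τ j) = (2:ℝ) ^ (((⌊L + lam⌋ : ℤ):ℝ) - 1 - lam) := by
    rw [ell, ← hL, hfloor]
    congr 1
    push_cast
    ring
  have hratio : τ j / ell lam (τ j) = (2:ℝ) ^ (Int.fract (L + lam) + 1) := by
    rw [hell, ← h2L, ← Real.rpow_sub two_pos]
    congr 1
    simp only [Int.fract]
    ring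
  rw [hratio]
  apply Real.rpow_le_rpow_of_exponent_le one_le_two
  have hb2 : Int.fract (L + lam) ≤ 1 - g := key1 ▸ key2
  rw [hgdef] at hb2
  linarith
end

section
/- There exists a prediction set P of size k (namely τ_j = 2^{j/k} for j = 0,...,k-1) such that every 4-robust schedule X(λ), λ ∈ [0,1), has consistency at least 2^{2 - 1/k}: there exists τ ∈ P with τ/ℓ(X(λ),τ) ≥ 2^{2-1/k}. -/
/-- There is a prediction set of size `k`, namely `τ_j = 2^{j/k}` for `j = 0,…,k-1`,
such that every 4-robust schedule `X(λ)`, `λ ∈ [0,1)`, has consistency at least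
`2^{2-1/k}`: some `τ_j` satisfies `τ_j/ℓ(X(λ),τ_j) ≥ 2^{2-1/k}`. -/
theorem stmt_14 (k : ℕ) (hk : 0 < k) (lam : ℝ) (hlam : lam ∈ Set.Ico (0 : ℝ) 1) :
    ∃ j < k,
      (2 : ℝ) ^ ((j : ℝ) / (k : ℝ)) / ell lam ((2 : ℝ) ^ ((j : ℝ) / (k : ℝ)))
        ≥ (2 : ℝ) ^ ((2 : ℝ) - 1 / (k : ℝ)) := by
  obtain ⟨hlam0, hlam1⟩ := hlam
  have hk' : (0:ℝ) < k := by exact_mod_cast hk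
  have h0 : (0:ℤ) ≤ ⌊(k:ℝ)*lam⌋ := Int.floor_nonneg.mpr (by positivity)
  set m : ℕ := (⌊(k : ℝ) * lam⌋).toNat with hm
  have hmle : (m:ℝ) ≤ (k:ℝ)*lam := by
    have : ((m:ℤ):ℝ) ≤ (k:ℝ)*lam := by
      rw [hm, Int.toNat_of_nonneg h0]; exact Int.floor_le _
    exact_mod_cast this
  have hmlt : (k:ℝ)*lam < (m:ℝ)+1 := by
    have : (k:ℝ)*lam < ((m:ℤ):ℝ)+1 := by
      rw [hm, Int.toNat_of_nonneg h0]; exact Int.lt_floor_add_one _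
    exact_mod_cast this
  have hmk : m < k := by
    by_contra h
    push_neg at h
    have : (k:ℝ) ≤ (m:ℝ) := by exact_mod_cast h
    nlinarith
  refine ⟨k - 1 - m, by omega, ?_⟩
  have hjr : ((k - 1 - m : ℕ):ℝ) = (k:ℝ) - 1 - (m:ℝ) := by
    have h1 : (k - 1 - m : ℕ) = k - (1 + m) := by omega
    rw [h1, Nat.cast_sub (by omega)]
    push_cast; ring
  set x : ℝ := ((k - 1 - m : ℕ):ℝ) / (k:ℝ) with hx
  have hxlo : 1 - 1/(k:ℝ) ≤ x + lam := by
    rw [hx, hjr, div_add' _ _ _ (ne_of_gt hk'), le_div_iff₀ hk']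
    have h1 : (1 - 1/(k:ℝ))*(k:ℝ) = (k:ℝ) - 1 := by field_simp
    linarith
  have hxhi : x + lam < 1 := by
    rw [hx, hjr]
    have : lam < ((m:ℝ)+1)/(k:ℝ) := by rw [lt_div_iff₀ hk']; linarith
    have := this
    rw [div_add' _ _ _ (ne_of_gt hk'), div_lt_one hk']
    nlinarith
  have hlog : Real.logb 2 ((2:ℝ) ^ x) = x := Real.logb_rpow (by norm_num) (by norm_num)
  have hfloor : ⌊x - 1 + lam⌋ = -1 := by
    apply Int.floor_eq_iff.mpr
    constructor
    · push_cast
      have : (0:ℝ) ≤ 1 - 1/(k:ℝ) := by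
        have : 1/(k:ℝ) ≤ 1 := by
          rw [div_le_one hk']; exact_mod_cast hk
        linarith
      linarith
    · push_cast; linarith
  rw [ell, hlog, hfloor]
  have h2 : (0:ℝ) < 2 := by norm_num
  rw [ge_iff_le, ← Real.rpow_sub h2]
  rw [Real.rpow_le_rpow_left_iff (by norm_num : (1:ℝ) < 2)]
  push_cast
  linarith
end

section
/- Fix n ≥ 1 and the n schedules X_j = (2^{i - j/n})_{i∈ℤ} for j = 0,...,n-1. For any probability distribution μ on (0,∞), the sum of expected profits satisfies ∑_{j=0}^{n-1} E_{z∼μ}[ℓ(X_j, z)] ≥ E_{z∼μ}[z] / (4(2^{1/n} - 1)). -/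
open MeasureTheory

private theorem floor_shift' (n : ℕ) (hn : 0 < n) (s : ℝ) (j : ℤ) :
    ⌊s + (j:ℝ)/(n:ℝ)⌋ = (⌊(n:ℝ)*s⌋ + j) / (n:ℤ) := by
  have hn' : (0:ℝ) < n := by exact_mod_cast hn
  set m : ℤ := ⌊(n:ℝ)*s⌋ with hm
  have h1 : (m:ℝ) ≤ (n:ℝ)*s := Int.floor_le _
  have h2 : (n:ℝ)*s < m + 1 := Int.lt_floor_add_one _
  have hnz : (n:ℤ) ≠ 0 := by exact_mod_cast hn.ne'
  obtain ⟨hr0, hr1⟩ : 0 ≤ (m+j) % (n:ℤ) ∧ (m+j) % (n:ℤ) < n :=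
    ⟨Int.emod_nonneg _ hnz, Int.emod_lt_of_pos _ (by exact_mod_cast hn)⟩
  have hdm : (n:ℤ) * ((m+j) / (n:ℤ)) + (m+j) % (n:ℤ) = m + j := Int.mul_ediv_add_emod _ _
  have hdmR : (n:ℝ) * (((m+j) / (n:ℤ) : ℤ) : ℝ) + (((m+j) % (n:ℤ) : ℤ) : ℝ) = (m:ℝ) + j := by
    exact_mod_cast hdm
  have hr0R : (0:ℝ) ≤ (((m+j) % (n:ℤ) : ℤ) : ℝ) := by exact_mod_cast hr0
  have hr1R : (((m+j) % (n:ℤ) : ℤ) : ℝ) < (n:ℝ) := by exact_mod_cast hr1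
  have hr1R' : (((m+j) % (n:ℤ) : ℤ) : ℝ) + 1 ≤ (n:ℝ) := by
    have : (m+j) % (n:ℤ) + 1 ≤ (n:ℤ) := hr1
    exact_mod_cast this
  have hj : (n:ℝ) * ((j:ℝ)/(n:ℝ)) = (j:ℝ) := by field_simp
  rw [Int.floor_eq_iff]
  constructor
  · rw [← sub_nonneg]
    have : (0:ℝ) ≤ (n:ℝ) * (s + (j:ℝ)/(n:ℝ) - (((m+j) / (n:ℤ) : ℤ) : ℝ)) := by
      rw [mul_sub, mul_add, hj]; nlinarith
    nlinarith
  · rw [← sub_pos]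
    have : (0:ℝ) < (n:ℝ) * ((((m+j) / (n:ℤ) : ℤ) : ℝ) + 1 - (s + (j:ℝ)/(n:ℝ))) := by
      rw [mul_sub, mul_add, mul_add, hj]; nlinarith
    nlinarith

private theorem sum_ell_eq' (n : ℕ) (hn : 0 < n) (z : ℝ) :
    ∑ j ∈ Finset.range n, ell ((j:ℝ)/(n:ℝ)) z
      = (2:ℝ) ^ (((⌊(n:ℝ)*(Real.logb 2 z - 1)⌋ : ℤ):ℝ)/(n:ℝ))
        * ∑ k ∈ Finset.range n, (2:ℝ) ^ (-(k:ℝ)/(n:ℝ)) := by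
  have hn' : (0:ℝ) < n := by exact_mod_cast hn
  set s : ℝ := Real.logb 2 z - 1 with hs
  set m : ℤ := ⌊(n:ℝ)*s⌋ with hm
  set r : ℕ := (m % (n:ℤ)).toNat with hrdef
  have hrn : r < n := by
    have h1 : m % (n:ℤ) < n := Int.emod_lt_of_pos _ (by exact_mod_cast hn)
    have h0 : 0 ≤ m % (n:ℤ) := Int.emod_nonneg _ (by exact_mod_cast hn.ne')
    omega
  have hrcast : ((r:ℤ)) = m % (n:ℤ) := by
    have h0 : 0 ≤ m % (n:ℤ) := Int.emod_nonneg _ (by exact_mod_cast hn.ne')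
    omega
  rw [Finset.mul_sum]
  refine Finset.sum_nbij' (fun j => (j + r) % n) (fun k => (k + (n - r)) % n) ?_ ?_ ?_ ?_ ?_
  · intro a ha; exact Finset.mem_range.mpr (Nat.mod_lt _ hn)
  · intro a ha; exact Finset.mem_range.mpr (Nat.mod_lt _ hn)
  · intro a ha
    show ((a + r) % n + (n - r)) % n = a
    rw [Nat.mod_add_mod]
    have h : a + r + (n - r) = a + n := by omega
    rw [h, Nat.add_mod_right, Nat.mod_eq_of_lt (Finset.mem_range.mp ha)]
  · intro a ha
    show ((a + (n - r)) % n + r) % n = a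
    rw [Nat.mod_add_mod]
    have h : a + (n - r) + r = a + n := by omega
    rw [h, Nat.add_mod_right, Nat.mod_eq_of_lt (Finset.mem_range.mp ha)]
  · intro j hj
    unfold ell
    rw [show Real.logb 2 z - 1 + (j:ℝ)/(n:ℝ) = s + ((j:ℤ):ℝ)/(n:ℝ) by push_cast; ring,
        floor_shift' n hn s j, ← Real.rpow_add two_pos]
    congr 1
    have hdm : (n:ℤ) * ((m+j) / (n:ℤ)) + (m+j) % (n:ℤ) = m + j := Int.mul_ediv_add_emod _ _
    have hmod : (m + (j:ℤ)) % (n:ℤ) = ((r:ℤ) + j) % (n:ℤ) := by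
      conv_lhs => rw [← Int.emod_add_mul_ediv m (n:ℤ)]
      rw [add_right_comm, Int.add_mul_emod_self_left, hrcast]
    have hw : (((j + r) % n : ℕ) : ℤ) = (m + (j:ℤ)) % (n:ℤ) := by
      rw [hmod]
      push_cast
      rw [add_comm (r:ℤ) (j:ℤ)]
    have hqZ : (n:ℤ) * ((m+(j:ℤ)) / (n:ℤ)) = m + j - (m + (j:ℤ)) % (n:ℤ) := by
      linarith [hdm]
    have hqR : (n:ℝ) * (((m+(j:ℤ)) / (n:ℤ) : ℤ) : ℝ)
        = (m:ℝ) + (j:ℝ) - (((m + (j:ℤ)) % (n:ℤ) : ℤ) : ℝ) := by exact_mod_cast hqZ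
    have hwR : ((((j + r) % n : ℕ)) : ℝ) = (((m + (j:ℤ)) % (n:ℤ) : ℤ) : ℝ) := by
      rw [← hw]; push_cast; norm_cast
    beta_reduce
    rw [hwR]
    field_simp
    nlinarith [hqR]

private theorem geom_val' (n : ℕ) (hn : 0 < n) :
    ∑ k ∈ Finset.range n, (2:ℝ) ^ (-(k:ℝ)/(n:ℝ))
      = (2:ℝ)⁻¹ / (1 - (2:ℝ) ^ (-(1:ℝ)/(n:ℝ))) := by
  have hn' : (0:ℝ) < n := by exact_mod_cast hn
  set r : ℝ := (2:ℝ) ^ (-(1:ℝ)/(n:ℝ)) with hr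
  have hterm : ∀ k : ℕ, (2:ℝ) ^ (-(k:ℝ)/(n:ℝ)) = r ^ k := by
    intro k
    rw [hr, ← Real.rpow_natCast ((2:ℝ) ^ (-(1:ℝ)/(n:ℝ))) k, ← Real.rpow_mul (by norm_num)]
    ring_nf
  have hrn : r ^ n = (2:ℝ)⁻¹ := by
    rw [hr, ← Real.rpow_natCast ((2:ℝ) ^ (-(1:ℝ)/(n:ℝ))) n, ← Real.rpow_mul (by norm_num)]
    rw [div_mul_cancel₀ _ hn'.ne', Real.rpow_neg_one]
  have hrlt : r < 1 := by
    rw [hr]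
    apply Real.rpow_lt_one_of_one_lt_of_neg (by norm_num)
    exact div_neg_of_neg_of_pos (by norm_num) hn'
  simp only [hterm]
  rw [geom_sum_eq (by linarith) n, hrn]
  rw [div_eq_div_iff (by linarith) (by linarith)]
  ring

private theorem pointwise_bound' (n : ℕ) (hn : 0 < n) (z : ℝ) (hz : 0 < z) :
    z / (4 * ((2:ℝ) ^ (1/(n:ℝ)) - 1)) ≤ ∑ j ∈ Finset.range n, ell ((j:ℝ)/(n:ℝ)) z := by
  have hn' : (0:ℝ) < n := by exact_mod_cast hn
  rw [sum_ell_eq' n hn z, geom_val' n hn]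
  set s : ℝ := Real.logb 2 z - 1 with hs
  set a : ℝ := (2:ℝ) ^ (1/(n:ℝ)) with ha
  have ha1 : 1 < a := Real.one_lt_rpow_iff_of_pos (by norm_num) |>.mpr
    (Or.inl ⟨by norm_num, by positivity⟩)
  have hainv : (2:ℝ) ^ (-(1:ℝ)/(n:ℝ)) = a⁻¹ := by
    rw [ha, ← Real.rpow_neg (by norm_num)]
    norm_num
    ring_nf
  have hfloor : s - 1/(n:ℝ) ≤ ((⌊(n:ℝ)*s⌋ : ℤ) : ℝ) / (n:ℝ) := by
    rw [le_div_iff₀ hn', sub_mul]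
    have h2 : (n:ℝ)*s < (⌊(n:ℝ)*s⌋ : ℤ) + 1 := Int.lt_floor_add_one _
    have h3 : 1/(n:ℝ) * n = 1 := by field_simp
    nlinarith
  have hmono : (2:ℝ) ^ (s - 1/(n:ℝ)) ≤ (2:ℝ) ^ ((((⌊(n:ℝ)*s⌋ : ℤ):ℝ))/(n:ℝ)) :=
    Real.rpow_le_rpow_left_iff (by norm_num) |>.mpr hfloor
  have h2s : (2:ℝ) ^ s = z / 2 := by
    rw [hs, Real.rpow_sub (by norm_num), Real.rpow_logb (by norm_num) (by norm_num) hz,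
      Real.rpow_one]
  have hpos : 0 < (2:ℝ)⁻¹ / (1 - (2:ℝ) ^ (-(1:ℝ)/(n:ℝ))) := by
    rw [hainv]
    have h : a⁻¹ < 1 := inv_lt_one_of_one_lt₀ ha1
    apply div_pos (by norm_num)
    linarith
  calc z / (4 * (a - 1))
      = (2:ℝ) ^ (s - 1/(n:ℝ)) * ((2:ℝ)⁻¹ / (1 - (2:ℝ) ^ (-(1:ℝ)/(n:ℝ)))) := by
        rw [Real.rpow_sub (by norm_num), h2s, hainv, ← ha]
        have h0 : a ≠ 0 := by linarith
        have h1 : a - 1 ≠ 0 := by linarith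
        have h2 : 1 - a⁻¹ ≠ 0 := by
          have : a⁻¹ < 1 := inv_lt_one_of_one_lt₀ ha1
          linarith
        rw [ha]
        field_simp
        ring
    _ ≤ _ := mul_le_mul_of_nonneg_right hmono hpos.le

private theorem ell_meas' (lam : ℝ) : Measurable (fun z : ℝ => ell lam z) := by
  have he : (fun z : ℝ => ell lam z)
      = fun z : ℝ => Real.exp (Real.log 2 * (((⌊Real.logb 2 z - 1 + lam⌋ : ℤ) : ℝ) - lam)) :=
    funext fun z => Real.rpow_def_of_pos two_pos _
  rw [he]
  have h1 : Measurable (fun z : ℝ => Real.logb 2 z - 1 + lam) := by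
    apply Measurable.add_const _ lam
    apply Measurable.sub_const _ 1
    exact Real.measurable_log.div_const _
  have h2 : Measurable (fun z : ℝ => ((⌊Real.logb 2 z - 1 + lam⌋ : ℤ) : ℝ)) :=
    (measurable_from_top (α := ℤ)).comp h1.floor
  exact Real.measurable_exp.comp ((h2.sub_const lam).const_mul _)

private theorem ell_le' (lam : ℝ) (z : ℝ) : ell lam z ≤ (2:ℝ) ^ (Real.logb 2 z - 1) := by
  unfold ell
  apply Real.rpow_le_rpow_of_exponent_le (by norm_num)
  have := Int.floor_le (Real.logb 2 z - 1 + lam)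
  linarith

private theorem ell_integrable' (n : ℕ) (hn : 0 < n) (j : ℕ) (μ : Measure ℝ)
    [IsProbabilityMeasure μ] (hsupp : μ (Set.Iic 0) = 0)
    (hint : Integrable (fun z : ℝ => z) μ) :
    Integrable (fun z : ℝ => ell ((j:ℝ)/(n:ℝ)) z) μ := by
  have hae : ∀ᵐ z ∂μ, 0 < z := by
    rw [ae_iff]
    convert hsupp using 2
    ext z; simp [Set.Iic, not_lt]
  refine hint.mono (ell_meas' _).aestronglyMeasurable ?_
  filter_upwards [hae] with z hz
  have h1 : ell ((j:ℝ)/(n:ℝ)) z ≤ (2:ℝ) ^ (Real.logb 2 z - 1) := ell_le' _ z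
  have h2 : (2:ℝ) ^ (Real.logb 2 z - 1) = z / 2 := by
    rw [Real.rpow_sub (by norm_num), Real.rpow_logb (by norm_num) (by norm_num) hz,
      Real.rpow_one]
  have h3 : 0 < ell ((j:ℝ)/(n:ℝ)) z := Real.rpow_pos_of_pos (by norm_num) _
  rw [Real.norm_eq_abs, Real.norm_eq_abs, abs_of_pos h3, abs_of_pos hz]
  linarith

/-- For any `n ≥ 1` and any probability distribution `μ` on `(0,∞)` (with finite
expectation), the sum over the `n` schedules `X_j = (2^{i-j/n})_{i∈ℤ}` of the
expected profits satisfies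
`∑_{j<n} E_{z∼μ}[ℓ(X_j,z)] ≥ E_{z∼μ}[z] / (4(2^{1/n}-1))`. -/
theorem stmt_15 (n : ℕ) (hn : 0 < n) (μ : Measure ℝ) [IsProbabilityMeasure μ]
    (hsupp : μ (Set.Iic 0) = 0) (hint : Integrable (fun z : ℝ => z) μ) :
    (∫ z, z ∂μ) / (4 * ((2 : ℝ) ^ (1 / (n : ℝ)) - 1))
      ≤ ∑ j ∈ Finset.range n, ∫ z, ell ((j : ℝ) / (n : ℝ)) z ∂μ := by
  have hae : ∀ᵐ z ∂μ, 0 < z := by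
    rw [ae_iff]
    convert hsupp using 2
    ext z; simp [Set.Iic, not_lt]
  have hip : ∀ j : ℕ, Integrable (fun z : ℝ => ell ((j:ℝ)/(n:ℝ)) z) μ :=
    fun j => ell_integrable' n hn j μ hsupp hint
  calc (∫ z, z ∂μ) / (4 * ((2 : ℝ) ^ (1 / (n : ℝ)) - 1))
      = ∫ z, z / (4 * ((2 : ℝ) ^ (1 / (n : ℝ)) - 1)) ∂μ := (integral_div _ _).symm
    _ ≤ ∫ z, ∑ j ∈ Finset.range n, ell ((j : ℝ) / (n : ℝ)) z ∂μ := by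
        apply integral_mono_ae (hint.div_const _)
          (integrable_finset_sum _ fun j _ => hip j)
        filter_upwards [hae] with z hz
        exact pointwise_bound' n hn z hz
    _ = ∑ j ∈ Finset.range n, ∫ z, ell ((j : ℝ) / (n : ℝ)) z ∂μ :=
        integral_finset_sum _ fun j _ => hip j
end

section
/- For every n ≥ 1 and every probability distribution μ on (0,∞), at least one of the n schedules X_j = (2^{i-j/n})_{i∈ℤ}, j = 0,...,n-1, satisfies E_{z∼μ}[z] / E_{z∼μ}[ℓ(X_j, z)] ≤ 4n(2^{1/n} - 1). -/
/-!
For `z > 0`, `ell (j / n) z = (z / 2) * 2 ^ (-{x + j / n})` with `x = log₂ z - 1`. The sum over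
`j < n` of a function of `{x + j / n}` is `1 / n`-periodic in `x`, and for `x ∈ [0, 1 / n)` the
`j`-th fractional part lies in `[j / n, (j + 1) / n)`. Hence
`∑ j, ell (j / n) z ≥ (z / 2) * ∑ j, 2 ^ (-(j + 1) / n) = z / (4 * (2 ^ (1 / n) - 1))`,
and integrating against `μ`, one of the `n` expectations is at least the average
`E[z] / (4 * n * (2 ^ (1 / n) - 1))`.
-/

open MeasureTheory Finset

theorem periodic_sum_range_add_div {g : ℝ → ℝ} (hg : Function.Periodic g 1) {n : ℕ}
    (hn : 0 < n) :
    Function.Periodic (fun x => ∑ j ∈ range n, g (x + j / n)) (1 / n) := by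
  intro x
  have hshift : ∀ j : ℕ, x + 1 / n + j / n = x + ((j + 1 : ℕ) : ℝ) / n := by
    intro j; push_cast; ring
  have hlast : g (x + (n : ℕ) / n) = g (x + (0 : ℕ) / n) := by
    rw [div_self (by positivity), Nat.cast_zero, zero_div, add_zero, hg x]
  have := (sum_range_succ' (fun j => g (x + j / n)) n).symm.trans
    (sum_range_succ (fun j => g (x + j / n)) n)
  simp only [hshift]
  linarith

theorem sum_range_apply_fract_add_div_ge {f : ℝ → ℝ} (hf : AntitoneOn f (Set.Icc 0 1))
    {n : ℕ} (hn : 0 < n) (x : ℝ) :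
    ∑ j ∈ range n, f ((j + 1) / n) ≤ ∑ j ∈ range n, f (Int.fract (x + j / n)) := by
  obtain ⟨y, ⟨hy0, hy1⟩, hxy⟩ :=
    (periodic_sum_range_add_div (g := fun t => f (Int.fract t))
      ((Int.fract_periodic ℝ).comp f) hn).exists_mem_Ico₀ (by positivity) x
  rw [hxy]
  refine sum_le_sum fun j hj => ?_
  have hn' : (0 : ℝ) < n := by exact_mod_cast hn
  have hj' : (j : ℝ) + 1 ≤ n := by exact_mod_cast mem_range.mp hj
  have hlt : y + j / n < (j + 1) / n := by rw [add_div]; linarith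
  have hle : (j + 1) / n ≤ (1 : ℝ) := (div_le_one hn').mpr hj'
  have hnn : 0 ≤ y + j / n := by positivity
  rw [Int.fract_eq_self.mpr ⟨hnn, hlt.trans_le hle⟩]
  exact hf ⟨hnn, hlt.le.trans hle⟩ ⟨by positivity, hle⟩ hlt.le

theorem sub_one_mul_sum_range_rpow_neg {a : ℝ} (ha : 0 < a) {n : ℕ} (hn : 0 < n) :
    (a ^ (1 / n : ℝ) - 1) * ∑ j ∈ range n, a ^ (-((j + 1) / n : ℝ)) = 1 - a⁻¹ := by
  have hterm : ∀ j : ℕ, (a ^ (1 / n : ℝ) - 1) * a ^ (-((j + 1) / n : ℝ))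
      = a ^ (-((j : ℕ) / n : ℝ)) - a ^ (-(((j + 1 : ℕ) : ℝ) / n)) := by
    intro j
    rw [sub_one_mul, ← Real.rpow_add ha]
    push_cast
    congr 2
    ring
  rw [mul_sum, sum_congr rfl fun j _ => hterm j, sum_range_sub', Nat.cast_zero, zero_div,
    neg_zero, Real.rpow_zero, div_self (by exact_mod_cast hn.ne'), Real.rpow_neg_one]

theorem integral_pos_of_ae_pos {α : Type*} [MeasurableSpace α] {μ : Measure α} [NeZero μ]
    {f : α → ℝ} (hfi : Integrable f μ) (hf : ∀ᵐ x ∂μ, 0 < f x) :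
    0 < ∫ x, f x ∂μ := by
  rw [integral_pos_iff_support_of_nonneg_ae (hf.mono fun _ hx => hx.le) hfi, pos_iff_ne_zero]
  intro h
  have hzero : ∀ᵐ x ∂μ, f x = 0 := measure_eq_zero_iff_ae_notMem.mp h |>.mono fun _ hx => by
    simpa using hx
  have : ∀ᵐ _ ∂μ, False := (hf.and hzero).mono fun _ hx => hx.1.ne' hx.2
  exact NeZero.ne μ (ae_eq_bot.mp (Filter.eventually_false_iff_eq_bot.mp this))

theorem exists_integral_ge_of_ae_le_sum {α ι : Type*} [MeasurableSpace α] {μ : Measure α}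
    {s : Finset ι} (hs : s.Nonempty) {f : ι → α → ℝ} {g : α → ℝ}
    (hf : ∀ i ∈ s, Integrable (f i) μ) (hg : Integrable g μ)
    (h : ∀ᵐ x ∂μ, g x ≤ ∑ i ∈ s, f i x) :
    ∃ i ∈ s, (∫ x, g x ∂μ) / #s ≤ ∫ x, f i x ∂μ := by
  have hsum : ∑ _i ∈ s, (∫ x, g x ∂μ) / #s ≤ ∑ i ∈ s, ∫ x, f i x ∂μ := by
    rw [sum_const, nsmul_eq_mul, mul_div_cancel₀ _ (by exact_mod_cast hs.card_pos.ne'),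
      ← integral_finsetSum s hf]
    exact integral_mono_ae hg (integrable_finsetSum s hf) h
  exact exists_le_of_sum_le hs hsum

theorem ell_pos (lam T : ℝ) : 0 < ell lam T := by
  unfold ell; positivity

theorem measurable_ell (lam : ℝ) : Measurable (ell lam) := by
  have hlogb : Measurable fun T : ℝ => Real.logb 2 T := Real.measurable_log.div_const _
  have hfloor : Measurable fun T : ℝ => ((⌊Real.logb 2 T - 1 + lam⌋ : ℤ) : ℝ) :=
    (measurable_of_countable _).comp ((hlogb.sub_const 1).add_const lam).floor
  exact measurable_const.pow (hfloor.sub_const lam)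

theorem ell_eq_mul_rpow_neg_fract (lam : ℝ) {T : ℝ} (hT : 0 < T) :
    ell lam T = T / 2 * 2 ^ (-Int.fract (Real.logb 2 T - 1 + lam)) := by
  have hexp : ((⌊Real.logb 2 T - 1 + lam⌋ : ℤ) : ℝ) - lam
      = (Real.logb 2 T - 1) + -Int.fract (Real.logb 2 T - 1 + lam) := by
    rw [Int.fract]; ring
  rw [ell, hexp, Real.rpow_add two_pos, Real.rpow_sub two_pos,
    Real.rpow_logb two_pos (by norm_num) hT, Real.rpow_one]

theorem ell_le_half (lam : ℝ) {T : ℝ} (hT : 0 < T) : ell lam T ≤ T / 2 := by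
  rw [ell_eq_mul_rpow_neg_fract lam hT]
  exact mul_le_of_le_one_right (by positivity)
    (Real.rpow_le_one_of_one_le_of_nonpos one_le_two (neg_nonpos.mpr (Int.fract_nonneg _)))

theorem div_four_mul_le_sum_ell {n : ℕ} (hn : 0 < n) {z : ℝ} (hz : 0 < z) :
    z / (4 * ((2 : ℝ) ^ (1 / n : ℝ) - 1)) ≤ ∑ j ∈ range n, ell (j / n) z := by
  have hs : 0 < (2 : ℝ) ^ (1 / n : ℝ) - 1 :=
    sub_pos.mpr (Real.one_lt_rpow one_lt_two (by positivity))
  have hgeom : ∑ j ∈ range n, (2 : ℝ) ^ (-((j + 1) / n : ℝ))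
      = 1 / (2 * ((2 : ℝ) ^ (1 / n : ℝ) - 1)) := by
    rw [eq_div_iff (by positivity), mul_comm, mul_assoc, sub_one_mul_sum_range_rpow_neg two_pos hn]
    norm_num
  have hanti : AntitoneOn (fun t : ℝ => (2 : ℝ) ^ (-t)) (Set.Icc 0 1) := fun a _ b _ hab =>
    Real.rpow_le_rpow_of_exponent_le one_le_two (neg_le_neg hab)
  calc z / (4 * ((2 : ℝ) ^ (1 / n : ℝ) - 1))
      = z / 2 * ∑ j ∈ range n, (2 : ℝ) ^ (-((j + 1) / n : ℝ)) := by
        rw [hgeom]; field_simp; ring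
    _ ≤ z / 2 * ∑ j ∈ range n, (2 : ℝ) ^ (-Int.fract (Real.logb 2 z - 1 + j / n)) :=
        mul_le_mul_of_nonneg_left (sum_range_apply_fract_add_div_ge hanti hn _) (by positivity)
    _ = ∑ j ∈ range n, ell (j / n) z := by
        rw [mul_sum]
        exact sum_congr rfl fun j _ => (ell_eq_mul_rpow_neg_fract _ hz).symm

/-- For every `n ≥ 1` and every probability distribution `μ` on `(0,∞)` (with finite
expectation), at least one of the `n` schedules `X_j = (2^{i-j/n})_{i∈ℤ}` has
consistency `E_{z∼μ}[z] / E_{z∼μ}[ℓ(X_j,z)]` at most `4n(2^{1/n}-1)`. -/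
theorem stmt_16 (n : ℕ) (hn : 0 < n) (μ : Measure ℝ) [IsProbabilityMeasure μ]
    (hsupp : μ (Set.Iic 0) = 0) (hint : Integrable (fun z : ℝ => z) μ) :
    ∃ j < n,
      (∫ z, z ∂μ) / (∫ z, ell ((j : ℝ) / (n : ℝ)) z ∂μ)
        ≤ 4 * (n : ℝ) * ((2 : ℝ) ^ (1 / (n : ℝ)) - 1) := by
  have hpos : ∀ᵐ z ∂μ, 0 < z := measure_eq_zero_iff_ae_notMem.mp hsupp |>.mono fun z hz => by
    simpa using hz
  have hell : ∀ lam, Integrable (ell lam) μ := fun lam =>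
    (hint.div_const 2).mono' (measurable_ell lam).aestronglyMeasurable <| hpos.mono fun z hz => by
      rw [Real.norm_of_nonneg (ell_pos lam z).le]; exact ell_le_half lam hz
  have hc : 0 < 4 * ((2 : ℝ) ^ (1 / n : ℝ) - 1) :=
    mul_pos four_pos (sub_pos.mpr (Real.one_lt_rpow one_lt_two (by positivity)))
  obtain ⟨j, hj, hle⟩ := exists_integral_ge_of_ae_le_sum (nonempty_range_iff.mpr hn.ne')
    (fun j _ => hell (j / n)) (hint.div_const _)
    (hpos.mono fun z hz => div_four_mul_le_sum_ell hn hz)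
  refine ⟨j, mem_range.mp hj, ?_⟩
  rw [integral_div, card_range, div_div] at hle
  have hE : 0 < ∫ z, z ∂μ := integral_pos_of_ae_pos hint hpos
  rw [div_le_iff₀ (lt_of_lt_of_le (by positivity) hle)]
  rw [div_le_iff₀ (by positivity)] at hle
  linarith
end

section
/- Let 0 ≤ λ_0 < λ_1 < ... < λ_{n-1} < 1 and ε > 0 be small. Define a discrete distribution μ placing probability p_k = 2^{λ_{k+1}-λ_0} - 2^{λ_k-λ_0} (for k < n-1) and p_{n-1} = 2 - 2^{λ_{n-1}-λ_0} on the point 2^{2-λ_k-ε}. Then for every k, the expected profit of schedule X(λ_k) = (2^{i-λ_k})_{i∈ℤ} under μ equals 2^{-λ_0}. -/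
/-- Let `0 ≤ λ_0 < … < λ_{n-1} < 1` and `ε > 0` be small (smaller than each gap
`λ_{j+1}-λ_j` and than `1-(λ_{n-1}-λ_0)`).  The distribution `μ` places probability
`p_k = 2^{λ_{k+1}-λ_0} - 2^{λ_k-λ_0}` (for `k < n-1`) and `p_{n-1} = 2 - 2^{λ_{n-1}-λ_0}`
on the point `2^{2-λ_k-ε}`.  Then for every `m < n`, the expected profit of the
schedule `X(λ_m)` under `μ` equals `2^{-λ_0}`. -/
theorem stmt_17 (n : ℕ) (hn : 0 < n) (L : ℕ → ℝ) (ε : ℝ)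
    (h0 : 0 ≤ L 0)
    (hmono : ∀ j, j + 1 < n → L j < L (j + 1))
    (hlast : L (n - 1) < 1)
    (hε : 0 < ε)
    (hεgap : ∀ j, j + 1 < n → ε < L (j + 1) - L j)
    (hεlast : ε < 1 - (L (n - 1) - L 0))
    (p : ℕ → ℝ)
    (hp : ∀ k, k + 1 < n → p k = (2 : ℝ) ^ (L (k + 1) - L 0) - (2 : ℝ) ^ (L k - L 0))
    (hplast : p (n - 1) = 2 - (2 : ℝ) ^ (L (n - 1) - L 0)) :
    ∀ m < n,
      ∑ k ∈ Finset.range n, p k * ell (L m) ((2 : ℝ) ^ ((2 : ℝ) - L k - ε))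
        = (2 : ℝ) ^ (-(L 0)) := by
  -- monotonicity of L on the range
  have hLe : ∀ j, j < n → ∀ i, i ≤ j → L i ≤ L j := by
    intro j hj
    induction j with
    | zero => intro i hi; rw [Nat.le_zero.mp hi]
    | succ j ih =>
      intro i hi
      rcases Nat.eq_or_lt_of_le hi with h | h
      · rw [h]
      · exact le_trans (ih (by omega) i (by omega)) (le_of_lt (hmono j hj))
  -- strict separation: for i < j < n, ε < L j - L i
  have hsep : ∀ i j, i < j → j < n → ε < L j - L i := by
    intro i j hij hj
    have h1 : ε < L (i + 1) - L i := hεgap i (by omega)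
    have h2 : L (i + 1) ≤ L j := hLe j hj (i + 1) (by omega)
    linarith
  -- all L k ≤ L (n-1)
  have hLtop : ∀ k, k < n → L k ≤ L (n - 1) := by
    intro k hk; exact hLe (n - 1) (by omega) k (by omega)
  have hL0 : ∀ k, k < n → L 0 ≤ L k := by
    intro k hk; exact hLe k hk 0 (by omega)
  -- value of ell
  have hell : ∀ m k, m < n → k < n →
      ell (L m) ((2 : ℝ) ^ ((2 : ℝ) - L k - ε))
        = (if k < m then 2 else 1) * (2 : ℝ) ^ (-(L m)) := by
    intro m k hm hk
    have hlog : Real.logb 2 ((2 : ℝ) ^ ((2 : ℝ) - L k - ε)) = 2 - L k - ε :=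
      Real.logb_rpow (by norm_num) (by norm_num)
    unfold ell
    rw [hlog]
    have hbound : L m - L 0 < 1 - ε := by
      have := hLtop m hm; linarith
    have hbound' : L k - L 0 < 1 - ε := by
      have := hLtop k hk; linarith
    by_cases hkm : k < m
    · have hfloor : ⌊2 - L k - ε - 1 + L m⌋ = 1 := by
        apply Int.floor_eq_iff.mpr
        constructor
        · have := hsep k m hkm hm
          push_cast; linarith
        · have := hL0 k hk
          push_cast; linarith
      rw [hfloor, if_pos hkm]
      push_cast
      rw [show (1 : ℝ) - L m = 1 + (-(L m)) by ring, Real.rpow_add (by norm_num)]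
      norm_num
    · have hfloor : ⌊2 - L k - ε - 1 + L m⌋ = 0 := by
        apply Int.floor_eq_iff.mpr
        constructor
        · have := hL0 m hm
          push_cast; linarith
        · have hle : L m ≤ L k := by
            rcases Nat.lt_or_ge m k with h | h
            · exact le_of_lt (by have := hsep m k h hk; linarith)
            · have : k = m := by omega
              rw [this]
          push_cast; linarith
      rw [hfloor, if_neg hkm]
      push_cast
      rw [zero_sub]
      ring
  -- telescoping partial sums
  have htel : ∀ m, m < n → ∑ k ∈ Finset.range m, p k = (2 : ℝ) ^ (L m - L 0) - 1 := by
    intro m hm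
    induction m with
    | zero => simp
    | succ m ih =>
      rw [Finset.sum_range_succ, ih (by omega), hp m hm]
      ring
  -- total sum is 1
  have htot : ∑ k ∈ Finset.range n, p k = 1 := by
    have hn' : n = (n - 1) + 1 := by omega
    rw [hn', Finset.sum_range_succ, htel (n - 1) (by omega)]
    rw [hplast]
    ring
  intro m hm
  have hsum : ∑ k ∈ Finset.range n, p k * ell (L m) ((2 : ℝ) ^ ((2 : ℝ) - L k - ε))
      = ∑ k ∈ Finset.range n, (p k + if k < m then p k else 0) * (2 : ℝ) ^ (-(L m)) := by
    apply Finset.sum_congr rfl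
    intro k hk
    rw [hell m k hm (Finset.mem_range.mp hk)]
    by_cases h : k < m <;> simp [h] <;> ring
  rw [hsum, ← Finset.sum_mul, Finset.sum_add_distrib, htot]
  have hfil : ∑ k ∈ Finset.range n, (if k < m then p k else 0)
      = ∑ k ∈ Finset.range m, p k := by
    rw [← Finset.sum_filter]
    congr 1
    ext k
    simp only [Finset.mem_filter, Finset.mem_range]
    omega
  rw [hfil, htel m hm]
  have : (1 : ℝ) + ((2 : ℝ) ^ (L m - L 0) - 1) = (2 : ℝ) ^ (L m - L 0) := by ring
  rw [this, ← Real.rpow_add (by norm_num : (0:ℝ) < 2)]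
  ring_nf
end

section
/- With the distribution μ from the previous construction (support points 2^{2-λ_k-ε}, probabilities p_k as defined), in the limit ε → 0 the expectation satisfies E_{z∼μ}[z] = 2^{2-λ_0}(∑_{j<n} 2^{λ_{j+1}-λ_j} - n), where λ_n = λ_0 + 1. Consequently each schedule X(λ_k) has consistency E[z]/E[ℓ] = 4(∑_{j<n} 2^{λ_{j+1}-λ_j} - n) ≥ 4n(2^{1/n} - 1). -/
/-!
For `k < n` one has `p k * 2 ^ (2 - L k) = 2 ^ (2 - L 0) * (2 ^ (L (k + 1) - L k) - 1)`; the last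
probability fits this pattern because `L n = L 0 + 1`. Summing gives the expectation at `ε = 0`,
and continuity in `ε` gives the limit. Dividing by the expected profit `2 ^ (-L 0)` leaves the
factor `4`, and since the gaps `L (j + 1) - L j` sum to `1`, Jensen's inequality for the convex
function `x ↦ 2 ^ x` bounds `∑ j, 2 ^ (L (j + 1) - L j)` below by `n * 2 ^ (1 / n)`.
-/

open Filter Finset

lemma card_mul_rpow_sum_div_card_le_sum_rpow {ι : Type*} (t : Finset ι) {b : ℝ} (hb : 0 < b)
    (x : ι → ℝ) : #t * b ^ ((∑ i ∈ t, x i) / #t) ≤ ∑ i ∈ t, b ^ x i := by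
  rcases t.eq_empty_or_nonempty with rfl | ht
  · simp
  have hcard : (0 : ℝ) < #t := by exact_mod_cast ht.card_pos
  have jensen := (convexOn_rpow_left hb).map_sum_le (t := t) (w := fun _ => 1 / (#t : ℝ))
    (p := x) (fun _ _ => by positivity) (by simp [hcard.ne']) (fun _ _ => Set.mem_univ _)
  simp only [smul_eq_mul, ← mul_sum] at jensen
  rw [one_div_mul_eq_div] at jensen
  calc (#t : ℝ) * b ^ ((∑ i ∈ t, x i) / #t)
      ≤ #t * (1 / #t * ∑ i ∈ t, b ^ x i) := by gcongr
    _ = ∑ i ∈ t, b ^ x i := by field_simp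

lemma rpow_sub_sub_rpow_mul_rpow_sub {b : ℝ} (hb : 0 < b) (x y z c : ℝ) :
    (b ^ (y - x) - b ^ (z - x)) * b ^ (c - z) = b ^ (c - x) * (b ^ (y - z) - 1) := by
  rw [sub_mul, mul_sub, mul_one, ← Real.rpow_add hb, ← Real.rpow_add hb, ← Real.rpow_add hb]
  ring_nf

lemma sum_rpow_sub_mul_rpow_sub {b : ℝ} (hb : 0 < b) (n : ℕ) (L : ℕ → ℝ) (c : ℝ) :
    ∑ k ∈ range n, (b ^ (L (k + 1) - L 0) - b ^ (L k - L 0)) * b ^ (c - L k) =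
      b ^ (c - L 0) * (∑ j ∈ range n, b ^ (L (j + 1) - L j) - n) := by
  simp only [rpow_sub_sub_rpow_mul_rpow_sub hb, ← mul_sum, sum_sub_distrib, sum_const,
    card_range, nsmul_eq_mul, mul_one]

lemma rpow_two_sub_div_rpow_neg (x : ℝ) : (2 : ℝ) ^ (2 - x) / 2 ^ (-x) = 4 := by
  rw [← Real.rpow_sub two_pos]
  norm_num

lemma tendsto_sum_mul_rpow_sub {b : ℝ} (hb : b ≠ 0) (s : Finset ℕ) (p L : ℕ → ℝ) (c : ℝ) :
    Tendsto (fun ε : ℝ => ∑ k ∈ s, p k * b ^ (c - L k - ε)) (nhdsWithin 0 (Set.Ioi 0))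
      (nhds (∑ k ∈ s, p k * b ^ (c - L k))) := by
  refine tendsto_nhdsWithin_of_tendsto_nhds ?_
  have hcont : Continuous fun ε : ℝ => ∑ k ∈ s, p k * b ^ (c - L k - ε) := by
    fun_prop (disch := exact hb)
  simpa using hcont.tendsto 0

theorem stmt_18_general (n : ℕ) (L : ℕ → ℝ)
    (hend : L n = L 0 + 1)
    (p : ℕ → ℝ)
    (hp : ∀ k, k + 1 < n → p k = (2 : ℝ) ^ (L (k + 1) - L 0) - (2 : ℝ) ^ (L k - L 0))
    (hplast : p (n - 1) = 2 - (2 : ℝ) ^ (L (n - 1) - L 0)) :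
    Tendsto
        (fun ε : ℝ => ∑ k ∈ Finset.range n, p k * (2 : ℝ) ^ ((2 : ℝ) - L k - ε))
        (nhdsWithin 0 (Set.Ioi 0))
        (nhds ((2 : ℝ) ^ ((2 : ℝ) - L 0) *
          (∑ j ∈ Finset.range n, (2 : ℝ) ^ (L (j + 1) - L j) - n))) ∧
      ((2 : ℝ) ^ ((2 : ℝ) - L 0) *
          (∑ j ∈ Finset.range n, (2 : ℝ) ^ (L (j + 1) - L j) - n)) /
            (2 : ℝ) ^ (-(L 0))
        = 4 * (∑ j ∈ Finset.range n, (2 : ℝ) ^ (L (j + 1) - L j) - n) ∧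
      4 * (∑ j ∈ Finset.range n, (2 : ℝ) ^ (L (j + 1) - L j) - n)
        ≥ 4 * (n : ℝ) * ((2 : ℝ) ^ (1 / (n : ℝ)) - 1) := by
  have hp_range : ∀ k ∈ range n, p k = (2 : ℝ) ^ (L (k + 1) - L 0) - 2 ^ (L k - L 0) := by
    intro k hk
    rcases (Nat.succ_le_of_lt (mem_range.mp hk)).lt_or_eq with hlt | rfl
    · exact hp k hlt
    · rw [hend, add_sub_cancel_left, Real.rpow_one]
      exact hplast
  have hexp : ∑ k ∈ range n, p k * (2 : ℝ) ^ (2 - L k) =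
      2 ^ (2 - L 0) * (∑ j ∈ range n, (2 : ℝ) ^ (L (j + 1) - L j) - n) := by
    rw [← sum_rpow_sub_mul_rpow_sub two_pos]
    exact sum_congr rfl fun k hk => by rw [hp_range k hk]
  have hgaps : ∑ j ∈ range n, (L (j + 1) - L j) = 1 := by
    rw [sum_range_sub, hend, add_sub_cancel_left]
  have hjensen := card_mul_rpow_sum_div_card_le_sum_rpow (range n) two_pos
    (fun j => L (j + 1) - L j)
  rw [hgaps, card_range] at hjensen
  refine ⟨hexp ▸ tendsto_sum_mul_rpow_sub two_ne_zero _ p L 2, ?_, by linarith⟩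
  rw [mul_div_right_comm, rpow_two_sub_div_rpow_neg]

/-- With the distribution `μ` of the lower-bound construction (support points
`2^{2-λ_k-ε}`, probabilities `p_k = 2^{λ_{k+1}-λ_0} - 2^{λ_k-λ_0}` for `k < n-1`
and `p_{n-1} = 2 - 2^{λ_{n-1}-λ_0}`, where `λ_n = λ_0 + 1`): in the limit `ε → 0⁺`
the expectation `E_{z∼μ}[z]` equals `2^{2-λ_0}(∑_{j<n} 2^{λ_{j+1}-λ_j} - n)`;
consequently, since each schedule `X(λ_k)` has expected profit `2^{-λ_0}`, its
consistency equals `4(∑_{j<n} 2^{λ_{j+1}-λ_j} - n)`, which is at least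
`4n(2^{1/n} - 1)`. -/
theorem stmt_18 (n : ℕ) (hn : 0 < n) (L : ℕ → ℝ)
    (h0 : 0 ≤ L 0)
    (hmono : ∀ j, j + 1 < n → L j < L (j + 1))
    (hlast : L (n - 1) < 1)
    (hend : L n = L 0 + 1)
    (p : ℕ → ℝ)
    (hp : ∀ k, k + 1 < n → p k = (2 : ℝ) ^ (L (k + 1) - L 0) - (2 : ℝ) ^ (L k - L 0))
    (hplast : p (n - 1) = 2 - (2 : ℝ) ^ (L (n - 1) - L 0)) :
    Tendsto
        (fun ε : ℝ => ∑ k ∈ Finset.range n, p k * (2 : ℝ) ^ ((2 : ℝ) - L k - ε))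
        (nhdsWithin 0 (Set.Ioi 0))
        (nhds ((2 : ℝ) ^ ((2 : ℝ) - L 0) *
          (∑ j ∈ Finset.range n, (2 : ℝ) ^ (L (j + 1) - L j) - n))) ∧
      ((2 : ℝ) ^ ((2 : ℝ) - L 0) *
          (∑ j ∈ Finset.range n, (2 : ℝ) ^ (L (j + 1) - L j) - n)) /
            (2 : ℝ) ^ (-(L 0))
        = 4 * (∑ j ∈ Finset.range n, (2 : ℝ) ^ (L (j + 1) - L j) - n) ∧
      4 * (∑ j ∈ Finset.range n, (2 : ℝ) ^ (L (j + 1) - L j) - n)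
        ≥ 4 * (n : ℝ) * ((2 : ℝ) ^ (1 / (n : ℝ)) - 1) :=
  stmt_18_general n L hend p hp hplast
end

section
/- For any ε > 0 and any schedule X that is 2-consistent with a sufficiently large prediction τ (meaning X completes a contract of length τ/2 exactly at time τ) and 4-robust, the interruption T = τ - ε satisfies ℓ(X,T) ≤ T/4 + ε/4. -/
/-- If the 4-robust schedule `X(λ)` is 2-consistent with prediction `τ`, i.e. it
completes a contract of length `τ/2` exactly at time `τ` (so `ℓ(X(λ),τ) = τ/2`),
then for any small `ε > 0`, the interruption `T = τ - ε` satisfies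
`ℓ(X(λ),T) ≤ T/4 + ε/4`. -/
theorem stmt_19 (lam τ ε : ℝ) (hτ : 0 < τ) (hε : 0 < ε) (hsmall : ε < τ / 2)
    (hcons : ell lam τ = τ / 2) :
    ell lam (τ - ε) ≤ (τ - ε) / 4 + ε / 4 := by
  set n : ℤ := ⌊Real.logb 2 τ - 1 + lam⌋ with hn
  have hτeq : τ = (2 : ℝ) ^ (((n : ℝ) - lam) + 1) := by
    have := hcons
    unfold ell at this
    rw [← hn] at this
    have h2 : (2 : ℝ) ^ (((n : ℝ) - lam) + 1) = 2 ^ ((n : ℝ) - lam) * 2 := by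
      rw [Real.rpow_add (by norm_num), Real.rpow_one]
    rw [h2, this]; ring
  have hlogτ : Real.logb 2 τ = ((n : ℝ) - lam) + 1 := by
    rw [hτeq, Real.logb_rpow (by norm_num)]; norm_num
  have hTpos : 0 < τ - ε := by linarith
  have hlt : Real.logb 2 (τ - ε) < Real.logb 2 τ :=
    Real.logb_lt_logb (by norm_num) hTpos (by linarith)
  have hfl : ⌊Real.logb 2 (τ - ε) - 1 + lam⌋ < n := by
    rw [Int.floor_lt]
    push_cast
    rw [hlogτ] at hlt
    linarith
  have hle : (⌊Real.logb 2 (τ - ε) - 1 + lam⌋ : ℝ) ≤ (n : ℝ) - 1 := by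
    have : ⌊Real.logb 2 (τ - ε) - 1 + lam⌋ ≤ n - 1 := by omega
    exact_mod_cast this
  have hmono : ell lam (τ - ε) ≤ (2 : ℝ) ^ (((n : ℝ) - 1) - lam) := by
    unfold ell
    exact Real.rpow_le_rpow_of_exponent_le (by norm_num) (by linarith)
  have hval : (2 : ℝ) ^ (((n : ℝ) - 1) - lam) = τ / 4 := by
    rw [hτeq]
    rw [show ((n : ℝ) - lam) + 1 = (((n : ℝ) - 1) - lam) + 2 by ring,
      Real.rpow_add (by norm_num)]
    norm_num
  calc ell lam (τ - ε) ≤ τ / 4 := hval ▸ hmono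
    _ = (τ - ε) / 4 + ε / 4 := by ring
end
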